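/- The ultradiscrete QRT map Ψ₂ is periodic with period seven: for every (x,y) ∈ ℝ², Ψ₂⁷(x,y) = (x,y). -/

import Mathlib

/-!
`Ψ₂` is positively homogeneous and piecewise linear. The seven rays spanned by
`(0,-1), (1,0), (2,1), (1,1), (0,1), (-1,1), (-1,0)` form one orbit of `Ψ₂` and contain every
ray on which `Ψ₂` fails to be linear, so `Ψ₂` is linear on each of the seven cones between
consecutive rays and maps the `i`-th cone onto the `(i+4)`-th, sending the spanning vectors to
spanning vectors. Hence `Ψ₂⁷` turns each cone by `28 ≡ 0 (mod 7)` steps, i.e. fixes it pointwise.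
-/

/-- The ultradiscrete QRT map `Ψ₂(x,y) = (x̄, ȳ)` with `x̄ = -x + max(y, 0)` and
`ȳ = -y + |x̄|`. -/
noncomputable def psi2 (p : ℝ × ℝ) : ℝ × ℝ :=
  (-p.1 + max p.2 0, -p.2 + |(-p.1 + max p.2 0)|)

section Fan

-- `[AddMonoid ι] [One ι]` rather than `[AddMonoidWithOne ι]`: `Fin n` has no global instance of the latter.
variable {M ι : Type*} [AddCommMonoid M] [Module ℝ M] [AddMonoid ι] [One ι]

def RotatesFan (f : M → M) (r : ι → M) (k : ι) : Prop :=
  ∀ i (a b : ℝ), 0 ≤ a → 0 ≤ b → f (a • r i + b • r (i + 1)) = a • r (i + k) + b • r (i + k + 1)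

variable {f : M → M} {r : ι → M} {k : ι}

theorem RotatesFan.iterate_smul_add_smul (hf : RotatesFan f r k) {a b : ℝ} (ha : 0 ≤ a)
    (hb : 0 ≤ b) (m : ℕ) (i : ι) :
    f^[m] (a • r i + b • r (i + 1)) = a • r (i + m • k) + b • r (i + m • k + 1) := by
  induction m generalizing i with
  | zero => simp
  | succ m ih => rw [Function.iterate_succ_apply, hf i a b ha hb, ih, succ_nsmul', add_assoc]

theorem RotatesFan.iterate_eq_id (hf : RotatesFan f r k)
    (hcover : ∀ p, ∃ i, ∃ a b : ℝ, 0 ≤ a ∧ 0 ≤ b ∧ p = a • r i + b • r (i + 1))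
    {m : ℕ} (hm : m • k = 0) : f^[m] = id := by
  funext p
  obtain ⟨i, a, b, ha, hb, rfl⟩ := hcover p
  simp [hf.iterate_smul_add_smul ha hb, hm]

end Fan

theorem psi2_of_nonneg_of_le {x y : ℝ} (hy : 0 ≤ y) (hxy : x ≤ y) :
    psi2 (x, y) = (y - x, -x) := by
  simp only [psi2, max_eq_left hy, abs_of_nonneg (show 0 ≤ -x + y by linarith)]
  congr 1 <;> ring

theorem psi2_of_nonneg_of_ge {x y : ℝ} (hy : 0 ≤ y) (hxy : y ≤ x) :
    psi2 (x, y) = (y - x, x - 2 * y) := by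
  simp only [psi2, max_eq_left hy, abs_of_nonpos (show -x + y ≤ 0 by linarith)]
  congr 1 <;> ring

theorem psi2_of_nonpos_of_nonpos {x y : ℝ} (hy : y ≤ 0) (hx : x ≤ 0) :
    psi2 (x, y) = (-x, -x - y) := by
  simp only [psi2, max_eq_right hy, abs_of_nonneg (show 0 ≤ -x + 0 by linarith)]
  congr 1 <;> ring

theorem psi2_of_nonpos_of_nonneg {x y : ℝ} (hy : y ≤ 0) (hx : 0 ≤ x) :
    psi2 (x, y) = (-x, x - y) := by
  simp only [psi2, max_eq_right hy, abs_of_nonpos (show -x + 0 ≤ 0 by linarith)]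
  congr 1 <;> ring

def psi2Fan : Fin 7 → ℝ × ℝ := ![(0, -1), (1, 0), (2, 1), (1, 1), (0, 1), (-1, 1), (-1, 0)]

theorem psi2_rotatesFan : RotatesFan psi2 psi2Fan 4 := by
  intro i a b ha hb
  fin_cases i
  all_goals simp only [psi2Fan, Fin.reduceFinMk, Fin.isValue, Fin.reduceAdd, Fin.zero_eta,
    Fin.mk_one, Matrix.cons_val, Matrix.cons_val_zero, Matrix.cons_val_one, Prod.smul_mk,
    Prod.mk_add_mk, smul_eq_mul, mul_zero, mul_one, mul_neg, zero_add, add_zero]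
  · rw [psi2_of_nonpos_of_nonneg (by linarith) hb]; congr 1; ring
  · rw [psi2_of_nonneg_of_ge hb (by linarith)]; congr 1 <;> ring
  · rw [psi2_of_nonneg_of_ge (by linarith) (by linarith)]; congr 1 <;> ring
  · rw [psi2_of_nonneg_of_le (by linarith) (by linarith)]; congr 1; ring
  · rw [psi2_of_nonneg_of_le (by linarith) (by linarith)]; congr 1 <;> ring
  · rw [psi2_of_nonneg_of_le (by linarith) (by linarith)]; congr 1 <;> ring
  · rw [psi2_of_nonpos_of_nonpos (by linarith) (by linarith)]; congr 1 <;> ring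

theorem exists_mem_psi2Fan_cone (p : ℝ × ℝ) :
    ∃ i, ∃ a b : ℝ, 0 ≤ a ∧ 0 ≤ b ∧ p = a • psi2Fan i + b • psi2Fan (i + 1) := by
  obtain ⟨x, y⟩ := p
  rcases le_total 0 x with hx | hx <;> rcases le_total 0 y with hy | hy
  · rcases le_total x y with hxy | hxy
    · exact ⟨3, x, y - x, hx, by linarith, by ext <;> simp [psi2Fan]⟩
    rcases le_total x (2 * y) with hxy' | hxy'
    · exact ⟨2, x - y, 2 * y - x, by linarith, by linarith, by ext <;> simp [psi2Fan] <;> ring⟩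
    · exact ⟨1, x - 2 * y, y, by linarith, hy, by ext <;> simp [psi2Fan]; ring⟩
  · exact ⟨0, -y, x, by linarith, hx, by ext <;> simp [psi2Fan]⟩
  · rcases le_total (-x) y with hxy | hxy
    · exact ⟨4, x + y, -x, by linarith, by linarith, by ext <;> simp [psi2Fan]⟩
    · exact ⟨5, y, -x - y, hy, by linarith, by ext <;> simp [psi2Fan]⟩
  · exact ⟨6, -x, -y, by linarith, by linarith, by ext <;> simp [psi2Fan]⟩

theorem psi2_period_seven (p : ℝ × ℝ) : psi2^[7] p = p :=
  congrFun (psi2_rotatesFan.iterate_eq_id exists_mem_psi2Fan_cone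
    (show 7 • (4 : Fin 7) = 0 from rfl)) p
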